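/- In the extragradient setting with γ ∈ (0, 1/L], define ξᵏ⁺¹ = (1/γ)(zᵏ - zᵏ⁺¹) - F(z̄ᵏ) (so that ξᵏ⁺¹ ∈ ∂g(zᵏ⁺¹)). Then ‖F(zᵏ⁺¹) + ξᵏ⁺¹‖² ≤ Vₖ for every k, where Vₖ = (2/γ)⟨zᵏ - zᵏ⁺¹, F(zᵏ) - F(z̄ᵏ)⟩ + (1/γ²)‖zᵏ⁺¹ - z̄ᵏ‖² + (1/γ²)‖zᵏ - zᵏ⁺¹‖². -/

import Mathlib

open scoped RealInnerProductSpace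

/-- `g` is proper: finite somewhere and never `⊥`. -/
def IsProperEF {H : Type*} (g : H → EReal) : Prop :=
  (∃ x, g x ≠ ⊤) ∧ ∀ x, g x ≠ ⊥

/-- `g` is convex (extended-real-valued). -/
def IsConvexEF {H : Type*} [NormedAddCommGroup H] [InnerProductSpace ℝ H]
    (g : H → EReal) : Prop :=
  ∀ x y : H, ∀ a b : ℝ, 0 ≤ a → 0 ≤ b → a + b = 1 →
    g (a • x + b • y) ≤ (a : EReal) * g x + (b : EReal) * g y

/-- `ξ` is a subgradient of `g` at `z`, i.e. `ξ ∈ ∂g(z)`. -/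
def InSubdiff {H : Type*} [NormedAddCommGroup H] [InnerProductSpace ℝ H]
    (g : H → EReal) (z ξ : H) : Prop :=
  ∀ y : H, g z + ((⟪ξ, y - z⟫ : ℝ) : EReal) ≤ g y

/-- `p = prox_{γ g}(x)`, i.e. `p` minimizes `g(·) + (1/(2γ))‖x - ·‖²`. -/
def IsProx {H : Type*} [NormedAddCommGroup H] [InnerProductSpace ℝ H]
    (g : H → EReal) (γ : ℝ) (x p : H) : Prop :=
  ∀ y : H, g p + ((1 / (2 * γ) * ‖x - p‖ ^ 2 : ℝ) : EReal) ≤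
    g y + ((1 / (2 * γ) * ‖x - y‖ ^ 2 : ℝ) : EReal)

/-- The Lyapunov function `V`. -/
noncomputable def lyapV {H : Type*} [NormedAddCommGroup H] [InnerProductSpace ℝ H]
    (F : H → H) (γ : ℝ) (z zb zp : H) : ℝ :=
  (2 / γ) * ⟪z - zp, F z - F zb⟫ + (1 / γ ^ 2) * ‖zp - zb‖ ^ 2 + (1 / γ ^ 2) * ‖z - zp‖ ^ 2

/-!
Writing `ξᵏ⁺¹ = γ⁻¹(zᵏ - zᵏ⁺¹) - F(z̄ᵏ)`, the residual is `F(zᵏ⁺¹) - F(z̄ᵏ) + γ⁻¹(zᵏ - zᵏ⁺¹)`.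
Expanding its square and comparing with `Vₖ`, the difference is
`(2/γ)⟨F(zᵏ) - F(zᵏ⁺¹), zᵏ - zᵏ⁺¹⟩ + (γ⁻²‖zᵏ⁺¹ - z̄ᵏ‖² - ‖F(zᵏ⁺¹) - F(z̄ᵏ)‖²)`:
the first term is nonnegative by monotonicity, the second by `L ≤ 1/γ`.
-/

lemma norm_sub_sq_le_of_lipschitz {E E' : Type*} [SeminormedAddCommGroup E]
    [SeminormedAddCommGroup E'] {F : E → E'} {L γ : ℝ}
    (hlip : ∀ x y : E, ‖F x - F y‖ ≤ L * ‖x - y‖) (hγ0 : 0 < γ) (hγ1 : γ * L ≤ 1) (x y : E) :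
    ‖F x - F y‖ ^ 2 ≤ 1 / γ ^ 2 * ‖x - y‖ ^ 2 := by
  have hL : L ≤ 1 / γ := by rw [le_div_iff₀ hγ0]; linarith
  have hle : ‖F x - F y‖ ≤ 1 / γ * ‖x - y‖ :=
    (hlip x y).trans (mul_le_mul_of_nonneg_right hL (norm_nonneg _))
  calc ‖F x - F y‖ ^ 2 ≤ (1 / γ * ‖x - y‖) ^ 2 := pow_le_pow_left₀ (norm_nonneg _) hle 2
    _ = 1 / γ ^ 2 * ‖x - y‖ ^ 2 := by ring

section

variable {H : Type*} [NormedAddCommGroup H] [InnerProductSpace ℝ H]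

lemma norm_add_inv_smul_sq (γ : ℝ) (a d : H) :
    ‖a + γ⁻¹ • d‖ ^ 2 = ‖a‖ ^ 2 + 2 / γ * ⟪d, a⟫ + 1 / γ ^ 2 * ‖d‖ ^ 2 := by
  rw [norm_add_sq_real, norm_smul, real_inner_smul_right, real_inner_comm, mul_pow,
    Real.norm_eq_abs, sq_abs]
  ring

lemma norm_residual_sq_le_lyapV {F : H → H} {L γ : ℝ}
    (hmono : ∀ x y : H, 0 ≤ ⟪F x - F y, x - y⟫)
    (hlip : ∀ x y : H, ‖F x - F y‖ ≤ L * ‖x - y‖) (hγ0 : 0 < γ) (hγ1 : γ * L ≤ 1)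
    (z zb zp : H) :
    ‖F zp - F zb + γ⁻¹ • (z - zp)‖ ^ 2 ≤ lyapV F γ z zb zp := by
  have hsplit : ⟪z - zp, F z - F zb⟫ = ⟪F z - F zp, z - zp⟫ + ⟪z - zp, F zp - F zb⟫ := by
    rw [real_inner_comm (z - zp) (F z - F zp), ← inner_add_right, sub_add_sub_cancel]
  have hmono_scaled : 0 ≤ 2 / γ * ⟪F z - F zp, z - zp⟫ := mul_nonneg (by positivity) (hmono z zp)
  have hlip_sq := norm_sub_sq_le_of_lipschitz hlip hγ0 hγ1 zp zb
  rw [norm_add_inv_smul_sq, lyapV, hsplit]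
  linarith

end

theorem stmt8_general {H : Type*} [NormedAddCommGroup H] [InnerProductSpace ℝ H]
    (F : H → H) (L γ : ℝ)
    (hmono : ∀ x y : H, 0 ≤ ⟪F x - F y, x - y⟫)
    (hlip : ∀ x y : H, ‖F x - F y‖ ≤ L * ‖x - y‖)
    (hγ0 : 0 < γ) (hγ1 : γ * L ≤ 1)
    (z zb : ℕ → H)
    (ξ : ℕ → H)
    (hξ : ∀ k, ξ (k + 1) = γ⁻¹ • (z k - z (k + 1)) - F (zb k)) :
    ∀ k : ℕ,
      ‖F (z (k + 1)) + ξ (k + 1)‖ ^ 2 ≤ lyapV F γ (z k) (zb k) (z (k + 1)) := by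
  intro k
  have hres : F (z (k + 1)) + ξ (k + 1) =
      F (z (k + 1)) - F (zb k) + γ⁻¹ • (z k - z (k + 1)) := by
    rw [hξ]; abel
  rw [hres]
  exact norm_residual_sq_le_lyapV hmono hlip hγ0 hγ1 (z k) (zb k) (z (k + 1))

theorem stmt8 {H : Type*} [NormedAddCommGroup H] [InnerProductSpace ℝ H] [CompleteSpace H]
    (F : H → H) (L γ : ℝ) (hL : 0 < L)
    (hmono : ∀ x y : H, 0 ≤ ⟪F x - F y, x - y⟫)
    (hlip : ∀ x y : H, ‖F x - F y‖ ≤ L * ‖x - y‖)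
    (g : H → EReal) (hproper : IsProperEF g) (hconv : IsConvexEF g)
    (hlsc : LowerSemicontinuous g)
    (hγ0 : 0 < γ) (hγ1 : γ * L ≤ 1)
    (z zb : ℕ → H)
    (hzb : ∀ k, IsProx g γ (z k - γ • F (z k)) (zb k))
    (hz : ∀ k, IsProx g γ (z k - γ • F (zb k)) (z (k + 1)))
    (ξ : ℕ → H)
    (hξ : ∀ k, ξ (k + 1) = γ⁻¹ • (z k - z (k + 1)) - F (zb k)) :
    ∀ k : ℕ,
      ‖F (z (k + 1)) + ξ (k + 1)‖ ^ 2 ≤ lyapV F γ (z k) (zb k) (z (k + 1)) :=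
  stmt8_general F L γ hmono hlip hγ0 hγ1 z zb ξ hξ
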